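/- Let r and ω be positive integers and let p : ℝ^r → ℝ be a homogeneous polynomial of degree ω whose vector of monomial coefficients has Euclidean norm 1 (i.e., p(x) = Σ_{|α|=ω} c_α x^α with Σ_α c_α² = 1). Then E_{g∼N(0,I_r)}[p(g)²] ≥ ω^{−ω/2}. -/

import Mathlib

/-!
Write `H_α = ∏ᵢ Heᵢ(xᵢ)` for the probabilists' Hermite polynomials in several variables and
`q = ∑_α c_α H_α`. Gaussian integration by parts, `E[x P(x)] = E[P'(x)]`, iterates to
`E[Heₙ Q] = E[Q⁽ⁿ⁾] = n! · coeff Q n` whenever `deg Q ≤ n`. If `|α| = |β|` and `α ≠ β` then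
`βᵢ < αᵢ` for some `i`, so `E[H_α x^β]` and `E[H_α H_β]` both vanish off the diagonal and equal
`α!` on it. Hence `E[q p] = E[q²] = ∑ c_α² α!`, and
`E[p²] ≥ 2 E[q p] - E[q²] = ∑ c_α² α! ≥ ∑ c_α² = 1 ≥ ω^(-ω/2)`.
-/

open MeasureTheory ProbabilityTheory

/-- The standard Gaussian measure `N(0, I_r)` on `ℝ^r`, i.e. the product of `r`
copies of the standard one-dimensional Gaussian. -/
noncomputable def gaussianPi (r : ℕ) : Measure (Fin r → ℝ) :=
  Measure.pi fun _ => gaussianReal 0 1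

open Polynomial
open scoped NNReal Nat

noncomputable section

lemma integrable_eval_gaussianReal (μ : ℝ) (v : ℝ≥0) (P : ℝ[X]) :
    Integrable (fun x => P.eval x) (gaussianReal μ v) := by
  have hpow (n : ℕ) : Integrable (fun x : ℝ => x ^ n) (gaussianReal μ v) :=
    integrable_pow_of_mem_interior_integrableExpSet (X := id)
      (by simp [integrableExpSet_id_gaussianReal]) n
  simp_rw [eval_eq_sum_range]
  exact integrable_finsetSum _ fun n _ => (hpow n).const_mul _

lemma integrable_gaussianPDFReal_mul_eval (μ : ℝ) {v : ℝ≥0} (hv : v ≠ 0) (P : ℝ[X]) :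
    Integrable (fun x => gaussianPDFReal μ v x * P.eval x) := by
  have h := integrable_eval_gaussianReal μ v P
  rw [gaussianReal_of_var_ne_zero μ hv, integrable_withDensity_iff (measurable_gaussianPDF μ v)
    (ae_of_all _ fun _ => gaussianPDF_lt_top)] at h
  simpa [toReal_gaussianPDF, mul_comm] using h

lemma hasDerivAt_gaussianPDFReal (μ : ℝ) (v : ℝ≥0) (x : ℝ) :
    HasDerivAt (gaussianPDFReal μ v) (-((x - μ) / v) * gaussianPDFReal μ v x) x := by
  have h : HasDerivAt (fun y => -(y - μ) ^ 2 / (2 * v)) (-((x - μ) / v)) x :=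
    ((((hasDerivAt_id' x).sub_const μ).fun_pow 2).fun_neg.div_const (2 * (v : ℝ))).congr_deriv
      (by simp; ring)
  rw [gaussianPDFReal_def]
  exact (h.exp.const_mul (√(2 * Real.pi * v))⁻¹).congr_deriv (by ring)

lemma integral_sub_mul_eval_gaussianReal (μ : ℝ) {v : ℝ≥0} (hv : v ≠ 0) (P : ℝ[X]) :
    ∫ x, (x - μ) * P.eval x ∂gaussianReal μ v =
      v * ∫ x, (derivative P).eval x ∂gaussianReal μ v := by
  have hint (Q : ℝ[X]) := integrable_gaussianPDFReal_mul_eval μ hv Q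
  have hv' : (v : ℝ) ≠ 0 := mod_cast hv
  have parts := integral_mul_deriv_eq_deriv_mul_of_integrable
    (u := fun x => P.eval x) (u' := fun x => (derivative P).eval x)
    (v := gaussianPDFReal μ v) (v' := fun x => -((x - μ) / v) * gaussianPDFReal μ v x)
    (fun x _ => P.hasDerivAt x) (fun x _ => hasDerivAt_gaussianPDFReal μ v x)
    ((hint (C (-(v : ℝ)⁻¹) * (X - C μ) * P)).congr (ae_of_all _ fun x => by simp; ring))
    ((hint (derivative P)).congr (ae_of_all _ fun x => by simp; ring))
    ((hint P).congr (ae_of_all _ fun x => by simp; ring))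
  simp only [integral_gaussianReal_eq_integral_smul hv, smul_eq_mul]
  calc ∫ x, gaussianPDFReal μ v x * ((x - μ) * P.eval x)
      = -v * ∫ x, P.eval x * (-((x - μ) / v) * gaussianPDFReal μ v x) := by
        rw [← integral_const_mul]; congr 1; ext x; field_simp
    _ = v * ∫ x, gaussianPDFReal μ v x * (derivative P).eval x := by
        rw [parts]; simp_rw [mul_comm ((derivative P).eval _)]; ring

def gaussianExpectation : ℝ[X] →ₗ[ℝ] ℝ where
  toFun P := ∫ x, P.eval x ∂gaussianReal 0 1
  map_add' P Q := by
    simp only [eval_add]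
    exact integral_add (integrable_eval_gaussianReal 0 1 P) (integrable_eval_gaussianReal 0 1 Q)
  map_smul' c P := by simp only [eval_smul, smul_eq_mul, RingHom.id_apply, integral_const_mul]

lemma gaussianExpectation_apply (P : ℝ[X]) :
    gaussianExpectation P = ∫ x, P.eval x ∂gaussianReal 0 1 := rfl

lemma gaussianExpectation_C (a : ℝ) : gaussianExpectation (C a) = a := by
  simp [gaussianExpectation_apply]

lemma gaussianExpectation_X_mul (P : ℝ[X]) :
    gaussianExpectation (X * P) = gaussianExpectation (derivative P) := by
  simpa [gaussianExpectation_apply] using integral_sub_mul_eval_gaussianReal 0 one_ne_zero P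

def hermiteReal (n : ℕ) : ℝ[X] := (hermite n).map (Int.castRingHom ℝ)

lemma hermiteReal_zero : hermiteReal 0 = 1 := by simp [hermiteReal]

lemma hermiteReal_succ (n : ℕ) :
    hermiteReal (n + 1) = X * hermiteReal n - derivative (hermiteReal n) := by
  simp [hermiteReal, hermite_succ, derivative_map]

lemma monic_hermiteReal (n : ℕ) : (hermiteReal n).Monic := (hermite_monic n).map _

lemma natDegree_hermiteReal (n : ℕ) : (hermiteReal n).natDegree = n := by
  rw [hermiteReal, (hermite_monic n).natDegree_map, natDegree_hermite]

lemma gaussianExpectation_hermiteReal_succ_mul (n : ℕ) (Q : ℝ[X]) :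
    gaussianExpectation (hermiteReal (n + 1) * Q) =
      gaussianExpectation (hermiteReal n * derivative Q) := by
  have stein := gaussianExpectation_X_mul (hermiteReal n * Q)
  rw [hermiteReal_succ, sub_mul, map_sub, mul_assoc, stein, derivative_mul, map_add]
  ring

lemma gaussianExpectation_hermiteReal_mul (n : ℕ) (Q : ℝ[X]) :
    gaussianExpectation (hermiteReal n * Q) = gaussianExpectation (derivative^[n] Q) := by
  induction n generalizing Q with
  | zero => rw [hermiteReal_zero, one_mul, Function.iterate_zero_apply]
  | succ n ih => rw [gaussianExpectation_hermiteReal_succ_mul, ih, Function.iterate_succ_apply]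

lemma gaussianExpectation_hermiteReal_mul_of_natDegree_le {n : ℕ} {Q : ℝ[X]}
    (hQ : Q.natDegree ≤ n) : gaussianExpectation (hermiteReal n * Q) = n ! * Q.coeff n := by
  have hconst : derivative^[n] Q = C ((n ! : ℝ) * Q.coeff n) := by
    rw [eq_C_of_natDegree_le_zero ((natDegree_iterate_derivative Q n).trans (by omega)),
      coeff_iterate_derivative, zero_add, Nat.descFactorial_self, nsmul_eq_mul]
  rw [gaussianExpectation_hermiteReal_mul, hconst, gaussianExpectation_C]

variable {r : ℕ}

lemma integrable_eval_gaussianPi (p : MvPolynomial (Fin r) ℝ) :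
    Integrable (fun g => MvPolynomial.eval g p) (gaussianPi r) := by
  have hmon (α : Fin r →₀ ℕ) : Integrable (fun g : Fin r → ℝ => ∏ i, g i ^ α i) (gaussianPi r) :=
    Integrable.fintype_prod (f := fun i x => x ^ α i) fun i => by
      simpa using integrable_eval_gaussianReal 0 1 (Polynomial.X ^ α i)
  rw [p.as_sum]
  simp_rw [map_sum, MvPolynomial.eval_monomial, Finsupp.prod_fintype _ _ (fun _ => pow_zero _)]
  exact integrable_finsetSum _ fun α _ => (hmon α).const_mul _

def mvGaussianExpectation (r : ℕ) : MvPolynomial (Fin r) ℝ →ₗ[ℝ] ℝ where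
  toFun p := ∫ g, MvPolynomial.eval g p ∂gaussianPi r
  map_add' p q := by
    simp only [map_add]
    exact integral_add (integrable_eval_gaussianPi p) (integrable_eval_gaussianPi q)
  map_smul' c p := by
    simp only [MvPolynomial.smul_eval, RingHom.id_apply, integral_const_mul, smul_eq_mul]

lemma mvGaussianExpectation_apply (p : MvPolynomial (Fin r) ℝ) :
    mvGaussianExpectation r p = ∫ g, MvPolynomial.eval g p ∂gaussianPi r := rfl

lemma mvGaussianExpectation_prod_aeval (P : Fin r → ℝ[X]) :
    mvGaussianExpectation r (∏ i, aeval (MvPolynomial.X i) (P i)) =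
      ∏ i, gaussianExpectation (P i) := by
  have h (g : Fin r → ℝ) (i : Fin r) :
      MvPolynomial.eval g (aeval (MvPolynomial.X i) (P i)) = (P i).eval (g i) := by
    simp [← MvPolynomial.coe_aeval_eq_eval, ← aeval_algHom_apply]
  simp only [mvGaussianExpectation_apply, gaussianExpectation_apply, map_prod, h]
  exact integral_fintype_prod_eq_prod (fun i x => (P i).eval x) (μ := fun _ => gaussianReal 0 1)

def mvHermite (α : Fin r →₀ ℕ) : MvPolynomial (Fin r) ℝ :=
  ∏ i, aeval (MvPolynomial.X i) (hermiteReal (α i))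

lemma mvGaussianExpectation_mvHermite_mul_prod_aeval {α β : Fin r →₀ ℕ}
    (hαβ : α.degree = β.degree) {Q : Fin r → ℝ[X]} (hQ : ∀ i, (Q i).Monic)
    (hQβ : ∀ i, (Q i).natDegree = β i) :
    mvGaussianExpectation r (mvHermite α * ∏ i, aeval (MvPolynomial.X i) (Q i)) =
      if α = β then ∏ i, ((α i)! : ℝ) else 0 := by
  rw [mvHermite, ← Finset.prod_mul_distrib]
  simp_rw [← map_mul]
  rw [mvGaussianExpectation_prod_aeval]
  split_ifs with h
  · subst h
    refine Finset.prod_congr rfl fun i _ => ?_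
    rw [gaussianExpectation_hermiteReal_mul_of_natDegree_le (hQβ i).le, ← hQβ i,
      (hQ i).coeff_natDegree, mul_one]
  · obtain ⟨i, hi⟩ : ∃ i, β i < α i := by
      by_contra! hle
      rw [Finsupp.degree_eq_sum, Finsupp.degree_eq_sum] at hαβ
      exact h <| Finsupp.ext fun i =>
        (Finset.sum_eq_sum_iff_of_le fun i _ => hle i).mp hαβ i (Finset.mem_univ i)
    refine Finset.prod_eq_zero (Finset.mem_univ i) ?_
    rw [gaussianExpectation_hermiteReal_mul_of_natDegree_le ((hQβ i).trans_le hi.le),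
      coeff_eq_zero_of_natDegree_lt ((hQβ i).trans_lt hi), mul_zero]

lemma mvGaussianExpectation_mvHermite_mul_mvHermite {α β : Fin r →₀ ℕ}
    (hαβ : α.degree = β.degree) :
    mvGaussianExpectation r (mvHermite α * mvHermite β) =
      if α = β then ∏ i, ((α i)! : ℝ) else 0 :=
  mvGaussianExpectation_mvHermite_mul_prod_aeval hαβ (fun _ => monic_hermiteReal _)
    fun _ => natDegree_hermiteReal _

lemma MvPolynomial.monomial_one_eq_prod_aeval_X_pow {σ R : Type*} [Fintype σ] [CommSemiring R]
    (β : σ →₀ ℕ) :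
    MvPolynomial.monomial β (1 : R) =
      ∏ i, Polynomial.aeval (MvPolynomial.X i : MvPolynomial σ R) (Polynomial.X ^ β i : R[X]) := by
  simp only [MvPolynomial.monomial_eq, map_one, one_mul, map_pow, Polynomial.aeval_X,
    Finsupp.prod_fintype _ _ fun _ => pow_zero _]

lemma mvGaussianExpectation_mvHermite_mul_monomial {α β : Fin r →₀ ℕ}
    (hαβ : α.degree = β.degree) :
    mvGaussianExpectation r (mvHermite α * MvPolynomial.monomial β 1) =
      if α = β then ∏ i, ((α i)! : ℝ) else 0 := by
  rw [MvPolynomial.monomial_one_eq_prod_aeval_X_pow]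
  exact mvGaussianExpectation_mvHermite_mul_prod_aeval hαβ (fun _ => monic_X_pow _)
    fun _ => natDegree_X_pow _

lemma two_mul_mvGaussianExpectation_mul_sub_le (p q : MvPolynomial (Fin r) ℝ) :
    2 * mvGaussianExpectation r (q * p) - mvGaussianExpectation r (q * q) ≤
      mvGaussianExpectation r (p * p) := by
  have hsq : 0 ≤ mvGaussianExpectation r ((p - q) ^ 2) :=
    integral_nonneg fun g => by simp only [map_pow]; positivity
  have hexpand : (p - q) ^ 2 = p * p - (2 : ℝ) • (q * p) + q * q := by rw [two_smul]; ring
  rw [hexpand, map_add, map_sub, map_smul, smul_eq_mul] at hsq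
  linarith

lemma LinearMap.map_sum_smul_mul_sum_smul_of_biorthogonal {ι R A : Type*} [DecidableEq ι]
    [CommSemiring R] [Semiring A] [Algebra R A] (L : A →ₗ[R] R) {s : Finset ι} {u v : ι → A}
    {w : ι → R} (huv : ∀ i ∈ s, ∀ j ∈ s, L (u i * v j) = if i = j then w i else 0) (c : ι → R) :
    L ((∑ i ∈ s, c i • u i) * ∑ j ∈ s, c j • v j) = ∑ i ∈ s, c i ^ 2 * w i := by
  simp_rw [Finset.sum_mul_sum, map_sum, smul_mul_smul, map_smul, smul_eq_mul]
  refine Finset.sum_congr rfl fun i hi => ?_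
  rw [Finset.sum_congr rfl fun j hj => by rw [huv i hi j hj], Finset.sum_eq_single_of_mem i hi]
  · rw [if_pos rfl]; ring
  · intro j _ hji; simp [hji.symm]

end

theorem gaussian_second_moment_homogeneous_poly_general (r ω : ℕ) (hω : 0 < ω)
    (p : MvPolynomial (Fin r) ℝ) (hp : p.IsHomogeneous ω)
    (hcoef : ∑ α ∈ p.support, MvPolynomial.coeff α p ^ 2 = 1) :
    (ω : ℝ) ^ (-(ω : ℝ) / 2) ≤ ∫ g, MvPolynomial.eval g p ^ 2 ∂(gaussianPi r) := by
  classical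
  set E := mvGaussianExpectation r
  set c := fun α => MvPolynomial.coeff α p
  set q := ∑ α ∈ p.support, c α • mvHermite α
  have hdeg {α β} (hα : α ∈ p.support) (hβ : β ∈ p.support) : α.degree = β.degree := by
    rw [Finsupp.degree_eq_weight_one]
    exact (hp (MvPolynomial.mem_support_iff.mp hα)).trans
      (hp (MvPolynomial.mem_support_iff.mp hβ)).symm
  have hp_sum : ∑ β ∈ p.support, c β • MvPolynomial.monomial β 1 = p := by
    simp_rw [MvPolynomial.smul_monomial, smul_eq_mul, mul_one]
    exact p.as_sum.symm
  have hqq : E (q * q) = ∑ α ∈ p.support, c α ^ 2 * ∏ i, ((α i)! : ℝ) :=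
    E.map_sum_smul_mul_sum_smul_of_biorthogonal
      (fun α hα β hβ => mvGaussianExpectation_mvHermite_mul_mvHermite (hdeg hα hβ)) c
  have hqp : E (q * p) = ∑ α ∈ p.support, c α ^ 2 * ∏ i, ((α i)! : ℝ) := by
    conv_lhs => rw [← hp_sum]
    exact E.map_sum_smul_mul_sum_smul_of_biorthogonal
      (fun α hα β hβ => mvGaussianExpectation_mvHermite_mul_monomial (hdeg hα hβ)) c
  calc (ω : ℝ) ^ (-(ω : ℝ) / 2) ≤ 1 :=
        Real.rpow_le_one_of_one_le_of_nonpos (mod_cast hω)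
          (by rw [neg_div]; exact neg_nonpos.mpr (by positivity))
    _ = ∑ α ∈ p.support, c α ^ 2 := hcoef.symm
    _ ≤ ∑ α ∈ p.support, c α ^ 2 * ∏ i, ((α i)! : ℝ) :=
        Finset.sum_le_sum fun α _ => le_mul_of_one_le_right (sq_nonneg _)
          (Finset.one_le_prod fun i _ => Nat.one_le_cast.mpr (Nat.factorial_pos _))
    _ = 2 * E (q * p) - E (q * q) := by rw [hqp, hqq]; ring
    _ ≤ E (p * p) := two_mul_mvGaussianExpectation_mul_sub_le p q
    _ = ∫ g, MvPolynomial.eval g p ^ 2 ∂(gaussianPi r) := by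
        simp [E, mvGaussianExpectation_apply, sq]

/-- For a homogeneous degree-`ω` polynomial `p` whose coefficient vector has unit
Euclidean norm, `E_{g∼N(0,I_r)}[p(g)²] ≥ ω^{−ω/2}`. -/
theorem gaussian_second_moment_homogeneous_poly (r ω : ℕ) (hr : 0 < r) (hω : 0 < ω)
    (p : MvPolynomial (Fin r) ℝ) (hp : p.IsHomogeneous ω)
    (hcoef : ∑ α ∈ p.support, MvPolynomial.coeff α p ^ 2 = 1) :
    (ω : ℝ) ^ (-(ω : ℝ) / 2) ≤ ∫ g, MvPolynomial.eval g p ^ 2 ∂(gaussianPi r) :=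
  gaussian_second_moment_homogeneous_poly_general r ω hω p hp hcoef
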